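/- arXiv:2208.08341 — 7 statements merged into one kernel-verified Lean document; each statement's English description precedes it below -/
import Mathlib

section
/- Given a finite probability space with a binary outcome y, binary decision δ, and group attribute a taking two values, if an algorithm satisfies both predictive parity (equal PPV and NPV across groups) and error rate balance (equal TPR and TNR across groups), then either the predictor is perfect (Pr[y=1 | a, x] ∈ {0,1} for all trait profiles) or the groups have equal base rates (Pr[y=1 | a] is the same for both groups). -/
/-!
Predictive parity says that the two groups share one PPV `p` and one NPV `n`, so the
confusion matrix of each group is determined by `p`, `n` and the masses `D₁`, `D₀` of its
positive and negative decisions: `TP = p D₁`, `FP = (1 - p) D₁`, `FN = (1 - n) D₀`,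
`TN = n D₀`. Cross-multiplying, equal TPRs and equal TNRs become
`p (1 - n) K = 0` and `n (1 - p) K = 0` with `K = D₁ D₀' - D₁' D₀`.
If `K = 0`, the two groups split their mass between the decisions in the same proportion,
and the base rate `p D₁ + (1 - n) D₀` over `D₁ + D₀` is the same for both.
Otherwise `p (1 - n) = n (1 - p) = 0`, which forces `p = n ∈ {0, 1}`: the outcome is a
function of the decision within each group.
-/

open scoped Classical

noncomputable def pr {Ω : Type*} [Fintype Ω] (P : Ω → ℝ) (A : Ω → Prop) : ℝ :=
  ∑ ω, if A ω then P ω else 0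

noncomputable def cpr {Ω : Type*} [Fintype Ω] (P : Ω → ℝ) (A B : Ω → Prop) : ℝ :=
  pr P (fun ω => A ω ∧ B ω) / pr P B

theorem eq_zero_and_eq_zero_or_eq_one_and_eq_one {R : Type*} [CommRing R] [NoZeroDivisors R]
    {p n : R} (hpn : p * (1 - n) = 0) (hnp : n * (1 - p) = 0) :
    p = 0 ∧ n = 0 ∨ p = 1 ∧ n = 1 := by
  obtain rfl : p = n := sub_eq_zero.1 (by linear_combination hpn - hnp)
  rcases mul_eq_zero.1 hpn with hp | hp
  · exact Or.inl ⟨hp, hp⟩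
  · exact Or.inr ⟨(sub_eq_zero.1 hp).symm, (sub_eq_zero.1 hp).symm⟩

structure ConfusionMatrix where
  tp : ℝ
  fp : ℝ
  fn : ℝ
  tn : ℝ

namespace ConfusionMatrix

variable (C : ConfusionMatrix)

noncomputable def ppv : ℝ := C.tp / (C.tp + C.fp)

noncomputable def npv : ℝ := C.tn / (C.fn + C.tn)

noncomputable def tpr : ℝ := C.tp / (C.tp + C.fn)

noncomputable def tnr : ℝ := C.tn / (C.fp + C.tn)

noncomputable def baseRate : ℝ := (C.tp + C.fn) / (C.tp + C.fp + (C.fn + C.tn))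

/-- The confusion matrix with PPV `p`, NPV `n`, and masses `D₁`, `D₀` of the positive and
negative decisions. -/
def ofRates (p n D₁ D₀ : ℝ) : ConfusionMatrix :=
  ⟨p * D₁, (1 - p) * D₁, (1 - n) * D₀, n * D₀⟩

theorem eq_ofRates (h₁ : C.tp + C.fp ≠ 0) (h₀ : C.fn + C.tn ≠ 0) :
    C = ofRates C.ppv C.npv (C.tp + C.fp) (C.fn + C.tn) := by
  obtain ⟨tp, fp, fn, tn⟩ := C
  simp only [ofRates, ppv, npv, mk.injEq]
  refine ⟨?_, ?_, ?_, ?_⟩ <;> field_simp <;> ring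

theorem perfect_or_baseRate_eq_of_eq_ofRates {C C' : ConfusionMatrix} {p n D₁ D₀ D₁' D₀' : ℝ}
    (hC : C = ofRates p n D₁ D₀) (hC' : C' = ofRates p n D₁' D₀')
    (hD₁ : 0 < D₁) (hD₀ : 0 < D₀) (hD₁' : 0 < D₁') (hD₀' : 0 < D₀')
    (hY₁ : C.tp + C.fn ≠ 0) (hY₀ : C.fp + C.tn ≠ 0)
    (hY₁' : C'.tp + C'.fn ≠ 0) (hY₀' : C'.fp + C'.tn ≠ 0)
    (htpr : C.tpr = C'.tpr) (htnr : C.tnr = C'.tnr) :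
    (p = 0 ∧ n = 0 ∨ p = 1 ∧ n = 1) ∨ C.baseRate = C'.baseRate := by
  subst hC hC'
  simp only [tpr, tnr, baseRate, ofRates] at *
  rw [div_eq_div_iff hY₁ hY₁'] at htpr
  rw [div_eq_div_iff hY₀ hY₀'] at htnr
  by_cases hK : D₁ * D₀' - D₁' * D₀ = 0
  · right
    rw [div_eq_div_iff (by ring_nf; positivity) (by ring_nf; positivity)]
    linear_combination (p - 1 + n) * hK
  · left
    refine eq_zero_and_eq_zero_or_eq_one_and_eq_one ?_ ?_
    · have h : p * (1 - n) * (D₁ * D₀' - D₁' * D₀) = 0 := by linear_combination htpr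
      exact (mul_eq_zero.1 h).resolve_right hK
    · have h : n * (1 - p) * (D₁ * D₀' - D₁' * D₀) = 0 := by linear_combination -htnr
      exact (mul_eq_zero.1 h).resolve_right hK

theorem perfect_or_baseRate_eq {C C' : ConfusionMatrix}
    (hD₁ : 0 < C.tp + C.fp) (hD₀ : 0 < C.fn + C.tn)
    (hD₁' : 0 < C'.tp + C'.fp) (hD₀' : 0 < C'.fn + C'.tn)
    (hY₁ : C.tp + C.fn ≠ 0) (hY₀ : C.fp + C.tn ≠ 0)
    (hY₁' : C'.tp + C'.fn ≠ 0) (hY₀' : C'.fp + C'.tn ≠ 0)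
    (hppv : C.ppv = C'.ppv) (hnpv : C.npv = C'.npv)
    (htpr : C.tpr = C'.tpr) (htnr : C.tnr = C'.tnr) :
    (C.ppv = 0 ∧ C.npv = 0 ∨ C.ppv = 1 ∧ C.npv = 1) ∨ C.baseRate = C'.baseRate := by
  have hC' := C'.eq_ofRates hD₁'.ne' hD₀'.ne'
  rw [← hppv, ← hnpv] at hC'
  exact perfect_or_baseRate_eq_of_eq_ofRates (C.eq_ofRates hD₁.ne' hD₀.ne') hC'
    hD₁ hD₀ hD₁' hD₀' hY₁ hY₀ hY₁' hY₀' htpr htnr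

end ConfusionMatrix

section Classifier

variable {Ω : Type*} [Fintype Ω] (P : Ω → ℝ)

theorem pr_congr {A B : Ω → Prop} (h : ∀ ω, A ω ↔ B ω) : pr P A = pr P B :=
  congrArg (pr P) (funext fun ω => propext (h ω))

theorem pr_split (b : Ω → Bool) (A : Ω → Prop) :
    pr P A = pr P (fun ω => b ω = true ∧ A ω) + pr P (fun ω => b ω = false ∧ A ω) := by
  simp only [pr, ← Finset.sum_add_distrib]
  refine Finset.sum_congr rfl fun ω _ => ?_
  rcases Bool.eq_false_or_eq_true (b ω) with hb | hb <;> simp [hb]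

theorem cpr_true_eq_one_sub_cpr_false (b : Ω → Bool) {B : Ω → Prop} (hB : pr P B ≠ 0) :
    cpr P (fun ω => b ω = true) B = 1 - cpr P (fun ω => b ω = false) B := by
  rw [eq_sub_iff_add_eq, cpr, cpr, ← add_div, ← pr_split, div_self hB]

variable (y δ a : Ω → Bool)

noncomputable def confusionMatrix (g : Bool) : ConfusionMatrix where
  tp := pr P fun ω => y ω = true ∧ δ ω = true ∧ a ω = g
  fp := pr P fun ω => y ω = false ∧ δ ω = true ∧ a ω = g
  fn := pr P fun ω => y ω = true ∧ δ ω = false ∧ a ω = g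
  tn := pr P fun ω => y ω = false ∧ δ ω = false ∧ a ω = g

theorem pr_group (g : Bool) :
    pr P (fun ω => a ω = g) =
      pr P (fun ω => δ ω = true ∧ a ω = g) + pr P (fun ω => δ ω = false ∧ a ω = g) :=
  pr_split P δ _

theorem pr_decision_group (d g : Bool) :
    pr P (fun ω => δ ω = d ∧ a ω = g) =
      pr P (fun ω => y ω = true ∧ δ ω = d ∧ a ω = g) +
        pr P (fun ω => y ω = false ∧ δ ω = d ∧ a ω = g) :=
  pr_split P y _

theorem pr_outcome_group (u g : Bool) :
    pr P (fun ω => y ω = u ∧ a ω = g) =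
      pr P (fun ω => y ω = u ∧ δ ω = true ∧ a ω = g) +
        pr P (fun ω => y ω = u ∧ δ ω = false ∧ a ω = g) := by
  rw [pr_split P δ]
  congr 1 <;> exact pr_congr P fun ω => by tauto

theorem pr_decision_outcome_group (d u g : Bool) :
    pr P (fun ω => δ ω = d ∧ y ω = u ∧ a ω = g) = pr P (fun ω => y ω = u ∧ δ ω = d ∧ a ω = g) :=
  pr_congr P fun ω => by tauto

theorem cpr_eq_ppv (g : Bool) :
    cpr P (fun ω => y ω = true) (fun ω => δ ω = true ∧ a ω = g) =
      (confusionMatrix P y δ a g).ppv := by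
  rw [cpr, pr_decision_group P y δ]
  rfl

theorem cpr_eq_npv (g : Bool) :
    cpr P (fun ω => y ω = false) (fun ω => δ ω = false ∧ a ω = g) =
      (confusionMatrix P y δ a g).npv := by
  rw [cpr, pr_decision_group P y δ]
  rfl

theorem cpr_eq_tpr (g : Bool) :
    cpr P (fun ω => δ ω = true) (fun ω => y ω = true ∧ a ω = g) =
      (confusionMatrix P y δ a g).tpr := by
  rw [cpr, pr_decision_outcome_group, pr_outcome_group P y δ]
  rfl

theorem cpr_eq_tnr (g : Bool) :
    cpr P (fun ω => δ ω = false) (fun ω => y ω = false ∧ a ω = g) =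
      (confusionMatrix P y δ a g).tnr := by
  rw [cpr, pr_decision_outcome_group, pr_outcome_group P y δ]
  rfl

theorem cpr_eq_baseRate (g : Bool) :
    cpr P (fun ω => y ω = true) (fun ω => a ω = g) = (confusionMatrix P y δ a g).baseRate := by
  rw [cpr, pr_outcome_group P y δ, pr_group P δ, pr_decision_group P y δ, pr_decision_group P y δ]
  rfl

end Classifier

theorem stmt_0_general {Ω : Type*} [Fintype Ω] (P : Ω → ℝ) (y δ a : Ω → Bool)
    (hδpos : ∀ g d, 0 < pr P (fun ω => δ ω = d ∧ a ω = g))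
    (hypos : ∀ g d, 0 < pr P (fun ω => y ω = d ∧ a ω = g))
    (hPPV : cpr P (fun ω => y ω = true) (fun ω => δ ω = true ∧ a ω = false)
          = cpr P (fun ω => y ω = true) (fun ω => δ ω = true ∧ a ω = true))
    (hNPV : cpr P (fun ω => y ω = false) (fun ω => δ ω = false ∧ a ω = false)
          = cpr P (fun ω => y ω = false) (fun ω => δ ω = false ∧ a ω = true))
    (hTPR : cpr P (fun ω => δ ω = true) (fun ω => y ω = true ∧ a ω = false)
          = cpr P (fun ω => δ ω = true) (fun ω => y ω = true ∧ a ω = true))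
    (hTNR : cpr P (fun ω => δ ω = false) (fun ω => y ω = false ∧ a ω = false)
          = cpr P (fun ω => δ ω = false) (fun ω => y ω = false ∧ a ω = true)) :
    (∀ d g, cpr P (fun ω => y ω = true) (fun ω => δ ω = d ∧ a ω = g) = 0 ∨
            cpr P (fun ω => y ω = true) (fun ω => δ ω = d ∧ a ω = g) = 1) ∨
    cpr P (fun ω => y ω = true) (fun ω => a ω = false)
      = cpr P (fun ω => y ω = true) (fun ω => a ω = true) := by
  set M := confusionMatrix P y δ a
  have hD₁ g : 0 < (M g).tp + (M g).fp := pr_decision_group P y δ a true g ▸ hδpos g true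
  have hD₀ g : 0 < (M g).fn + (M g).tn := pr_decision_group P y δ a false g ▸ hδpos g false
  have hY₁ g : (M g).tp + (M g).fn ≠ 0 := (pr_outcome_group P y δ a true g ▸ hypos g true).ne'
  have hY₀ g : (M g).fp + (M g).tn ≠ 0 := (pr_outcome_group P y δ a false g ▸ hypos g false).ne'
  rw [cpr_eq_ppv, cpr_eq_ppv] at hPPV
  rw [cpr_eq_npv, cpr_eq_npv] at hNPV
  rw [cpr_eq_tpr P y δ, cpr_eq_tpr P y δ] at hTPR
  rw [cpr_eq_tnr P y δ, cpr_eq_tnr P y δ] at hTNR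
  rw [cpr_eq_baseRate P y δ, cpr_eq_baseRate P y δ]
  refine (ConfusionMatrix.perfect_or_baseRate_eq (hD₁ false) (hD₀ false) (hD₁ true) (hD₀ true)
    (hY₁ false) (hY₀ false) (hY₁ true) (hY₀ true) hPPV hNPV hTPR hTNR).imp
    (fun hperfect d g => ?_) id
  have hppv : (M g).ppv = (M false).ppv := by cases g <;> [rfl; exact hPPV.symm]
  have hnpv : (M g).npv = (M false).npv := by cases g <;> [rfl; exact hNPV.symm]
  cases d
  · rw [cpr_true_eq_one_sub_cpr_false P y (hδpos g false).ne', cpr_eq_npv, hnpv]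
    rcases hperfect with ⟨-, h⟩ | ⟨-, h⟩ <;> simp [h]
  · rw [cpr_eq_ppv, hppv]
    rcases hperfect with ⟨h, -⟩ | ⟨h, -⟩ <;> simp [h]

/-- Impossibility theorem (Kleinberg–Mullainathan–Raghavan): predictive parity plus
error rate balance implies a perfect predictor or equal base rates. -/
theorem stmt_0 {Ω : Type*} [Fintype Ω] (P : Ω → ℝ) (y δ a : Ω → Bool)
    (hP : ∀ ω, 0 ≤ P ω) (hsum : ∑ ω, P ω = 1)
    (hδpos : ∀ g d, 0 < pr P (fun ω => δ ω = d ∧ a ω = g))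
    (hypos : ∀ g d, 0 < pr P (fun ω => y ω = d ∧ a ω = g))
    (hPPV : cpr P (fun ω => y ω = true) (fun ω => δ ω = true ∧ a ω = false)
          = cpr P (fun ω => y ω = true) (fun ω => δ ω = true ∧ a ω = true))
    (hNPV : cpr P (fun ω => y ω = false) (fun ω => δ ω = false ∧ a ω = false)
          = cpr P (fun ω => y ω = false) (fun ω => δ ω = false ∧ a ω = true))
    (hTPR : cpr P (fun ω => δ ω = true) (fun ω => y ω = true ∧ a ω = false)
          = cpr P (fun ω => δ ω = true) (fun ω => y ω = true ∧ a ω = true))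
    (hTNR : cpr P (fun ω => δ ω = false) (fun ω => y ω = false ∧ a ω = false)
          = cpr P (fun ω => δ ω = false) (fun ω => y ω = false ∧ a ω = true)) :
    (∀ d g, cpr P (fun ω => y ω = true) (fun ω => δ ω = d ∧ a ω = g) = 0 ∨
            cpr P (fun ω => y ω = true) (fun ω => δ ω = d ∧ a ω = g) = 1) ∨
    cpr P (fun ω => y ω = true) (fun ω => a ω = false)
      = cpr P (fun ω => y ω = true) (fun ω => a ω = true) :=
  stmt_0_general P y δ a hδpos hypos hPPV hNPV hTPR hTNR
end

section
/- For a group g with base rate p = Pr[y=1 | a=g], false positive rate FPR = Pr[δ=1 | y=0, a=g], false negative rate FNR = Pr[δ=0 | y=1, a=g], and positive predictive value PPV = Pr[y=1 | δ=1, a=g], the following identity holds: FPR = (p/(1-p)) · ((1-PPV)/PPV) · (1 - FNR), provided 0 < p < 1, PPV > 0, and Pr[δ=1 | a=g] > 0. -/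
open scoped Classical

/-!
Write `p = Pr[y = 1 | g]`, `PPV = Pr[y = 1 | δ = 1, g]` and `FNR = Pr[δ = 0 | y = 1, g]`. Their
complements are `Pr[y = 0 | g]`, `Pr[y = 0 | δ = 1, g]` and `Pr[δ = 1 | y = 1, g]`, so after
clearing the common denominators the right-hand side is
`Pr[y=1, g] / Pr[y=0, g] · Pr[y=0, δ=1, g] / Pr[y=1, δ=1, g] · Pr[δ=1, y=1, g] / Pr[y=1, g]`,
which telescopes to `Pr[δ=1, y=0, g] / Pr[y=0, g] = FPR`.
-/

section

variable {Ω : Type*} [Fintype Ω] (P : Ω → ℝ)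

lemma pr_eq_pr_true_add_pr_false (b : Ω → Bool) (B : Ω → Prop) :
    pr P B = pr P (fun ω => b ω = true ∧ B ω) + pr P (fun ω => b ω = false ∧ B ω) := by
  rw [pr, pr, pr, ← Finset.sum_add_distrib]
  refine Finset.sum_congr rfl fun ω _ => ?_
  cases b ω <;> simp

lemma pr_and_left_comm (A B C : Ω → Prop) :
    pr P (fun ω => A ω ∧ B ω ∧ C ω) = pr P (fun ω => B ω ∧ A ω ∧ C ω) :=
  congrArg (pr P) (funext fun _ => propext and_left_comm)

lemma pr_ne_zero_of_cpr_ne_zero {A B : Ω → Prop} (h : cpr P A B ≠ 0) :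
    pr P (fun ω => A ω ∧ B ω) ≠ 0 ∧ pr P B ≠ 0 :=
  div_ne_zero_iff.mp h

lemma cpr_true_add_cpr_false (b : Ω → Bool) {B : Ω → Prop} (hB : pr P B ≠ 0) :
    cpr P (fun ω => b ω = true) B + cpr P (fun ω => b ω = false) B = 1 := by
  rw [cpr, cpr, ← add_div, ← pr_eq_pr_true_add_pr_false, div_self hB]

lemma one_sub_cpr_true (b : Ω → Bool) {B : Ω → Prop} (hB : pr P B ≠ 0) :
    1 - cpr P (fun ω => b ω = true) B = cpr P (fun ω => b ω = false) B := by
  rw [← cpr_true_add_cpr_false P b hB, add_sub_cancel_left]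

lemma one_sub_cpr_false (b : Ω → Bool) {B : Ω → Prop} (hB : pr P B ≠ 0) :
    1 - cpr P (fun ω => b ω = false) B = cpr P (fun ω => b ω = true) B := by
  rw [← cpr_true_add_cpr_false P b hB, add_sub_cancel_right]

end

theorem stmt_1_general {Ω : Type*} [Fintype Ω] (P : Ω → ℝ) (y δ : Ω → Bool) (a : Ω → Bool) (g : Bool)
    (hp0 : 0 < cpr P (fun ω => y ω = true) (fun ω => a ω = g))
    (hp1 : cpr P (fun ω => y ω = true) (fun ω => a ω = g) < 1)
    (hPPV : 0 < cpr P (fun ω => y ω = true) (fun ω => δ ω = true ∧ a ω = g)) :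
    cpr P (fun ω => δ ω = true) (fun ω => y ω = false ∧ a ω = g)
      = (cpr P (fun ω => y ω = true) (fun ω => a ω = g)
          / (1 - cpr P (fun ω => y ω = true) (fun ω => a ω = g)))
        * ((1 - cpr P (fun ω => y ω = true) (fun ω => δ ω = true ∧ a ω = g))
            / cpr P (fun ω => y ω = true) (fun ω => δ ω = true ∧ a ω = g))
        * (1 - cpr P (fun ω => δ ω = false) (fun ω => y ω = true ∧ a ω = g)) := by
  obtain ⟨hy1, hg⟩ := pr_ne_zero_of_cpr_ne_zero P hp0.ne'
  obtain ⟨hy1δ1, hδ1⟩ := pr_ne_zero_of_cpr_ne_zero P hPPV.ne'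
  have hq0 : 1 - cpr P (fun ω => y ω = true) (fun ω => a ω = g) ≠ 0 := (sub_pos.mpr hp1).ne'
  rw [one_sub_cpr_true P y hg] at hq0 ⊢
  obtain ⟨hy0, -⟩ := pr_ne_zero_of_cpr_ne_zero P hq0
  rw [one_sub_cpr_true P y hδ1, one_sub_cpr_false P δ hy1]
  simp only [cpr]
  rw [pr_and_left_comm P (fun ω => δ ω = true), pr_and_left_comm P (fun ω => δ ω = true)]
  field_simp

/-- Chouldechova's identity: FPR = (p/(1-p)) · ((1-PPV)/PPV) · (1-FNR) within a group. -/
theorem stmt_1 {Ω : Type*} [Fintype Ω] (P : Ω → ℝ) (y δ : Ω → Bool) (a : Ω → Bool) (g : Bool)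
    (hP : ∀ ω, 0 ≤ P ω) (hsum : ∑ ω, P ω = 1)
    (hy1 : 0 < pr P (fun ω => y ω = true ∧ a ω = g))
    (hy0 : 0 < pr P (fun ω => y ω = false ∧ a ω = g))
    (hδ1 : 0 < pr P (fun ω => δ ω = true ∧ a ω = g))
    (hg : 0 < pr P (fun ω => a ω = g))
    (hp0 : 0 < cpr P (fun ω => y ω = true) (fun ω => a ω = g))
    (hp1 : cpr P (fun ω => y ω = true) (fun ω => a ω = g) < 1)
    (hPPV : 0 < cpr P (fun ω => y ω = true) (fun ω => δ ω = true ∧ a ω = g)) :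
    cpr P (fun ω => δ ω = true) (fun ω => y ω = false ∧ a ω = g)
      = (cpr P (fun ω => y ω = true) (fun ω => a ω = g)
          / (1 - cpr P (fun ω => y ω = true) (fun ω => a ω = g)))
        * ((1 - cpr P (fun ω => y ω = true) (fun ω => δ ω = true ∧ a ω = g))
            / cpr P (fun ω => y ω = true) (fun ω => δ ω = true ∧ a ω = g))
        * (1 - cpr P (fun ω => δ ω = false) (fun ω => y ω = true ∧ a ω = g)) :=
  stmt_1_general P y δ a g hp0 hp1 hPPV
end

section
/- If two groups have different base rates p₀ ≠ p₁ with 0 < p₀, p₁ < 1, and a classifier satisfies equal positive predictive values PPV₀ = PPV₁ ∈ (0,1) across groups and equal false negative rates FNR₀ = FNR₁ < 1 across groups, then the false positive rates must differ: FPR₀ ≠ FPR₁. -/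
/-- With unequal base rates, equal PPV and equal FNR force unequal FPRs
(via Chouldechova's identity). -/
theorem stmt_2 (p₀ p₁ PPV FNR FPR₀ FPR₁ : ℝ)
    (hp₀ : 0 < p₀) (hp₀' : p₀ < 1) (hp₁ : 0 < p₁) (hp₁' : p₁ < 1) (hne : p₀ ≠ p₁)
    (hPPV : 0 < PPV) (hPPV' : PPV < 1) (hFNR : FNR < 1)
    (hI₀ : FPR₀ = (p₀ / (1 - p₀)) * ((1 - PPV) / PPV) * (1 - FNR))
    (hI₁ : FPR₁ = (p₁ / (1 - p₁)) * ((1 - PPV) / PPV) * (1 - FNR)) :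
    FPR₀ ≠ FPR₁ := by
  intro h
  have hc : (0:ℝ) < ((1 - PPV) / PPV) * (1 - FNR) :=
    mul_pos (div_pos (by linarith) hPPV) (by linarith)
  have h2 : p₀ / (1 - p₀) = p₁ / (1 - p₁) := by
    have := hI₀.symm.trans (h.trans hI₁)
    rw [mul_assoc, mul_assoc] at this
    exact mul_right_cancel₀ (ne_of_gt hc) this
  have h3 : p₀ * (1 - p₁) = p₁ * (1 - p₀) :=
    (div_eq_div_iff (by linarith) (by linarith)).mp h2
  apply hne
  nlinarith
end

section
/- In the gender-blind testing model, the positive predictive value PPV(p,d) = p(φ + d(1-φ)) / (p(φ + d(1-φ)) + (1-p)d(1-φ)) is strictly decreasing in d ∈ (0,1] for fixed p ∈ (0,1) and φ ∈ (0,1). -/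
/-- PPV(p,d) is strictly decreasing in d on (0,1], for fixed p ∈ (0,1) and φ ∈ (0,1). -/
theorem stmt_7 (φ p : ℝ) (hφ : 0 < φ) (hφ' : φ < 1) (hp : 0 < p) (hp' : p < 1) :
    ∀ d₁ d₂ : ℝ, 0 < d₁ → d₁ < d₂ → d₂ ≤ 1 →
      p * (φ + d₂ * (1 - φ)) / (p * (φ + d₂ * (1 - φ)) + (1 - p) * d₂ * (1 - φ))
        < p * (φ + d₁ * (1 - φ)) / (p * (φ + d₁ * (1 - φ)) + (1 - p) * d₁ * (1 - φ)) := by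
  intro d₁ d₂ h1 h12 h2
  have hφ1 : 0 < 1 - φ := by linarith
  have hp1 : 0 < 1 - p := by linarith
  have hd2 : 0 < d₂ := lt_trans h1 h12
  have A : 0 < p * (φ + d₁ * (1 - φ)) + (1 - p) * d₁ * (1 - φ) := by nlinarith
  have B : 0 < p * (φ + d₂ * (1 - φ)) + (1 - p) * d₂ * (1 - φ) := by nlinarith
  rw [div_lt_div_iff₀ B A]
  nlinarith [mul_pos hp hφ, mul_pos hp1 hφ1, mul_pos (mul_pos hp hφ) (mul_pos hp1 hφ1)]
end

section
/- In the gender-blind testing model with prevalences p_m ≠ p_f (both in (0,1)) and common test precision φ ∈ (0,1), no pair of hiring probabilities (d_m, d_f) with d_m, d_f > 0 equalizes positive predictive value across groups while satisfying anti-classification (d_m = d_f). Equivalently: if d_m = d_f > 0 then PPV(p_m, d_m) ≠ PPV(p_f, d_f). -/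
/-- With different prevalences, no common (anti-classification) hiring probability d > 0
equalizes positive predictive value across the two groups. -/
theorem stmt_8 (φ pm pf dm df : ℝ) (hφ : 0 < φ) (hφ' : φ < 1)
    (hpm : 0 < pm) (hpm' : pm < 1) (hpf : 0 < pf) (hpf' : pf < 1) (hne : pm ≠ pf)
    (hdm : 0 < dm) (hdm' : dm ≤ 1) (hdf : 0 < df) (hdf' : df ≤ 1) (hanti : dm = df) :
    pm * (φ + dm * (1 - φ)) / (pm * (φ + dm * (1 - φ)) + (1 - pm) * dm * (1 - φ))
      ≠ pf * (φ + df * (1 - φ)) / (pf * (φ + df * (1 - φ)) + (1 - pf) * df * (1 - φ)) := by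
  subst hanti
  have hA : 0 < φ + dm * (1 - φ) := by nlinarith
  have hB : 0 < dm * (1 - φ) := by nlinarith
  have h1 : 0 < pm * (φ + dm * (1 - φ)) + (1 - pm) * dm * (1 - φ) := by nlinarith
  have h2 : 0 < pf * (φ + dm * (1 - φ)) + (1 - pf) * dm * (1 - φ) := by nlinarith
  intro h
  rw [div_eq_div_iff h1.ne' h2.ne'] at h
  apply hne
  have : (φ + dm * (1 - φ)) * (dm * (1 - φ)) * (pm - pf) = 0 := by nlinarith [h]
  have := mul_eq_zero.mp this
  rcases this with h' | h'
  · exact absurd h' (mul_pos hA hB).ne'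
  · linarith
end

section
/- In the gender-sensitive testing model with common prevalence p̃ ∈ (0,1) but group-specific test precisions φ^m ≠ φ^f (both in (0,1)), where TPR(φ, d) = d + φ(1 - d) is strictly increasing in φ and strictly increasing in d, while TNR(φ, d) = 1 - d(1-φ) is strictly increasing in φ and strictly decreasing in d, there exist no hiring probabilities (d_m, d_f) ∈ [0,1]² achieving both TPR(φ^m, d_m) = TPR(φ^f, d_f) and TNR(φ^m, d_m) = TNR(φ^f, d_f). -/
/-- With group-specific test precisions φm ≠ φf, no pair of hiring probabilities
(dm, df) ∈ [0,1]² equalizes both the true positive rate d + φ(1-d) and the true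
negative rate 1 - d(1-φ) across the two groups. -/
theorem stmt_10 (φm φf : ℝ) (hφm : 0 < φm) (hφm' : φm < 1) (hφf : 0 < φf) (hφf' : φf < 1)
    (hne : φm ≠ φf) :
    ¬ ∃ dm df : ℝ, 0 ≤ dm ∧ dm ≤ 1 ∧ 0 ≤ df ∧ df ≤ 1 ∧
        dm + φm * (1 - dm) = df + φf * (1 - df) ∧
        1 - dm * (1 - φm) = 1 - df * (1 - φf) := by
  rintro ⟨dm, df, _, _, _, _, h1, h2⟩
  apply hne
  nlinarith [h1, h2]
end

section
/- In the gender-sensitive testing model, the positive predictive value PPV(φ,d) = p̃(φ + d(1-φ)) / (p̃(φ + d(1-φ)) + (1-p̃)d(1-φ)) is strictly increasing in the test precision φ ∈ (0,1) for fixed p̃ ∈ (0,1) and d ∈ (0,1]. -/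
/-- PPV(φ,d) = p̃(φ + d(1-φ)) / (p̃(φ + d(1-φ)) + (1-p̃)d(1-φ)) is strictly increasing
in the test precision φ on (0,1), for fixed p̃ ∈ (0,1) and d ∈ (0,1]. -/
theorem stmt_11 (p d : ℝ) (hp : 0 < p) (hp' : p < 1) (hd : 0 < d) (hd' : d ≤ 1) :
    ∀ φ₁ φ₂ : ℝ, 0 < φ₁ → φ₁ < φ₂ → φ₂ < 1 →
      p * (φ₁ + d * (1 - φ₁)) / (p * (φ₁ + d * (1 - φ₁)) + (1 - p) * d * (1 - φ₁))
        < p * (φ₂ + d * (1 - φ₂)) / (p * (φ₂ + d * (1 - φ₂)) + (1 - p) * d * (1 - φ₂)) := by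
  intro φ₁ φ₂ h1 h12 h2
  have hφ1 : φ₁ < 1 := h12.trans h2
  have d1 : 0 < p * (φ₁ + d * (1 - φ₁)) + (1 - p) * d * (1 - φ₁) := by nlinarith
  have d2 : 0 < p * (φ₂ + d * (1 - φ₂)) + (1 - p) * d * (1 - φ₂) := by nlinarith
  rw [div_lt_div_iff₀ d1 d2]
  nlinarith [mul_pos hp hd, mul_pos (mul_pos hp hd) (sub_pos.2 hp')]
end
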